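/- arXiv:1612.06159 — 2 statements merged into one kernel-verified Lean document; each statement's English description precedes it below -/
import Mathlib

section
/- Let x_1, ..., x_K be distinct nonzero complex numbers and β_1, ..., β_K be nonzero complex numbers. Then for any N ≥ K, the N × (K+1) Hankel-type matrix Z with entries Z_{q,j} = Σ_{k=1}^K β_k x_k^{M - q - j} (for appropriate integer exponents so each row is (d_{m_q}, d_{m_q −1}, ..., d_{m_q − K}) with d_m = Σ_k β_k x_k^m and m_q ≥ K) has rank exactly K, and hence a one-dimensional null space. -/
open Finset

/-- The Hankel-type annihilating matrix, whose rows are `K+1` consecutive moments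
`d_{M-q}, d_{M-q-1}, …, d_{M-q-K}` of the measure `∑ β_k δ_{x_k}` with distinct
nonzero nodes and nonzero weights, has rank exactly `K` (hence a one-dimensional
null space) as soon as it has `N ≥ K` rows. -/
theorem hankel_rank (K N M : ℕ) (x β : Fin K → ℂ)
    (hx : Function.Injective x) (hx0 : ∀ k, x k ≠ 0) (hβ : ∀ k, β k ≠ 0)
    (hN : K ≤ N) (hM : N - 1 + K ≤ M) :
    (Matrix.of fun (q : Fin N) (j : Fin (K + 1)) =>
        ∑ k, β k * x k ^ (M - (q : ℕ) - (j : ℕ))).rank = K := by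
  classical
  set A : Matrix (Fin N) (Fin K) ℂ :=
    Matrix.of fun q k => β k * x k ^ (M - (q : ℕ) - K) with hA
  set B : Matrix (Fin K) (Fin (K + 1)) ℂ :=
    Matrix.of fun k j => x k ^ (K - (j : ℕ)) with hB
  have hZ : (Matrix.of fun (q : Fin N) (j : Fin (K + 1)) =>
      ∑ k, β k * x k ^ (M - (q : ℕ) - (j : ℕ))) = A * B := by
    ext q j
    simp only [Matrix.mul_apply, hA, hB, Matrix.of_apply]
    refine Finset.sum_congr rfl fun k _ => ?_
    rw [mul_assoc, ← pow_add]
    congr 2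
    have hq : (q : ℕ) < N := q.isLt
    have hj : (j : ℕ) ≤ K := Nat.lt_succ_iff.mp j.isLt
    omega
  -- injectivity of A.mulVecLin
  have hAinj : Function.Injective A.mulVecLin := by
    rw [← LinearMap.ker_eq_bot, LinearMap.ker_eq_bot']
    intro v hv
    have hv' : ∀ q : Fin N, ∑ k, β k * x k ^ (M - (q : ℕ) - K) * v k = 0 := by
      intro q
      have := congrFun hv q
      simpa [Matrix.mulVecLin_apply, Matrix.mulVec, dotProduct, hA] using this
    have key : ∀ i : Fin K, ∑ k, (β k * v k * x k ^ (M - (2 * K - 1))) * x k ^ (i : ℕ) = 0 := by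
      intro i
      have hi : (i : ℕ) < K := i.isLt
      have hq : K - 1 - (i : ℕ) < N := by omega
      have h := hv' ⟨K - 1 - (i : ℕ), hq⟩
      rw [← h]
      refine Finset.sum_congr rfl fun k _ => ?_
      have he : M - (K - 1 - (i : ℕ)) - K = (M - (2 * K - 1)) + (i : ℕ) := by omega
      rw [he, pow_add]
      ring
    have hz := Matrix.eq_zero_of_forall_pow_sum_mul_pow_eq_zero hx
      (v := fun k => β k * v k * x k ^ (M - (2 * K - 1))) (fun i => key i)
    funext k
    have hk := congrFun hz k
    simp only [Pi.zero_apply] at hk ⊢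
    rcases mul_eq_zero.mp hk with h | h
    · rcases mul_eq_zero.mp h with h' | h'
      · exact absurd h' (hβ k)
      · exact h'
    · exact absurd h (pow_ne_zero _ (hx0 k))
  -- surjectivity of B.mulVecLin
  have hBsurj : Function.Surjective B.mulVecLin := by
    set B' : Matrix (Fin K) (Fin K) ℂ :=
      Matrix.of fun k j => x k ^ (K - (j : ℕ)) with hB'
    have hB'inj : Function.Injective B'.mulVec := by
      intro w w' hww
      have h0 : B'.mulVec (w - w') = 0 := by
        rw [Matrix.mulVec_sub, hww, sub_self]
      set u : Fin K → ℂ := w - w' with hu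
      have h1 : ∀ k : Fin K, ∑ i : Fin K, u (Fin.rev i) * x k ^ (i : ℕ) = 0 := by
        intro k
        have hrow := congrFun h0 k
        simp only [Matrix.mulVec, dotProduct, hB', Matrix.of_apply,
          Pi.zero_apply] at hrow
        have hre : ∑ j : Fin K, x k ^ (K - (j : ℕ)) * u j
            = ∑ i : Fin K, x k ^ (K - (Fin.rev i : ℕ)) * u (Fin.rev i) :=
          (Fintype.sum_equiv Fin.revPerm _ _ (fun i => rfl)).symm
        have hsum : x k * ∑ i : Fin K, u (Fin.rev i) * x k ^ (i : ℕ) = 0 := by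
          rw [Finset.mul_sum, ← hrow, hre]
          refine Finset.sum_congr rfl fun i _ => ?_
          have hival : K - (Fin.rev i : ℕ) = (i : ℕ) + 1 := by
            rw [Fin.val_rev]; omega
          rw [hival, pow_succ]
          ring
        rcases mul_eq_zero.mp hsum with h | h
        · exact absurd h (hx0 k)
        · exact h
      have := Matrix.eq_zero_of_forall_index_sum_mul_pow_eq_zero hx
        (v := fun i => u (Fin.rev i)) h1
      have hu0 : u = 0 := by
        funext j
        have := congrFun this (Fin.rev j)
        simpa using this
      have : w - w' = 0 := hu0
      exact sub_eq_zero.mp this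
    have hB'unit : IsUnit B' := Matrix.mulVec_injective_iff_isUnit.mp hB'inj
    have hB'surj : Function.Surjective B'.mulVec :=
      Matrix.mulVec_surjective_iff_isUnit.mpr hB'unit
    intro y
    obtain ⟨w, hw⟩ := hB'surj y
    refine ⟨fun j => if h : (j : ℕ) < K then w ⟨j, h⟩ else 0, ?_⟩
    funext k
    rw [← congrFun hw k]
    simp only [Matrix.mulVecLin_apply, Matrix.mulVec, dotProduct, hB, hB',
      Matrix.of_apply]
    rw [Fin.sum_univ_castSucc]
    simp only [Fin.coe_castSucc, Fin.val_last]
    rw [dif_neg (lt_irrefl K)]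
    rw [mul_zero, add_zero]
    refine Finset.sum_congr rfl fun j _ => ?_
    rw [dif_pos j.isLt]
  -- conclude
  rw [hZ, Matrix.rank, Matrix.mulVecLin_mul, LinearMap.range_comp,
    LinearMap.range_eq_top.mpr hBsurj, Submodule.map_top,
    LinearMap.finrank_range_of_inj hAinj]
  simp
end

section
/- Let K ≥ 1 and suppose (θ_k, φ_k, α_k) and (θ'_k, φ'_k, α'_k), k = 1, ..., K, are two parameter sets with θ_k, θ'_k ∈ (0, π), all α_k, α'_k ≠ 0, such that the x_k = sin θ_k e^{−iφ_k} are pairwise distinct and the x'_k = sin θ'_k e^{−iφ'_k} are pairwise distinct. If Σ_k α_k x_k^m = Σ_k α'_k x'^m_k and Σ_k α_k cos(θ_k) x_k^m = Σ_k α'_k cos(θ'_k) x'^m_k for all m = 0, 1, ..., 2K−1, then there is a permutation σ of {1, ..., K} with x'_k = x_{σ(k)}, α'_k = α_{σ(k)}, and θ'_k = θ_{σ(k)} for all k. -/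
open Finset Real

lemma vandermonde_sum_zero (S : Finset ℂ) (c : ℂ → ℂ)
    (h : ∀ m < S.card, ∑ s ∈ S, c s * s ^ m = 0) :
    ∀ t ∈ S, c t = 0 := by
  intro t ht
  have hinj : Set.InjOn (id : ℂ → ℂ) S := Function.injective_id.injOn
  set p := Lagrange.basis S (id : ℂ → ℂ) t with hp
  have hdeg : p.natDegree < S.card := by
    rw [hp, Lagrange.natDegree_basis hinj ht]
    exact Nat.sub_lt (Finset.card_pos.mpr ⟨t, ht⟩) one_pos
  have key : ∑ s ∈ S, c s * p.eval s = c t := by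
    rw [Finset.sum_eq_single t]
    · rw [show p.eval t = p.eval (id t) from rfl, Lagrange.eval_basis_self hinj ht, mul_one]
    · intro b hb hbt
      rw [show p.eval b = p.eval (id b) from rfl,
        Lagrange.eval_basis_of_ne (Ne.symm hbt) hb, mul_zero]
    · intro h'; exact absurd ht h'
  have hz : ∑ s ∈ S, c s * p.eval s = 0 := by
    calc ∑ s ∈ S, c s * p.eval s
        = ∑ s ∈ S, ∑ m ∈ Finset.range S.card, c s * (p.coeff m * s ^ m) := by
          refine Finset.sum_congr rfl fun s _ => ?_
          rw [Polynomial.eval_eq_sum_range' hdeg s, Finset.mul_sum]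
      _ = ∑ m ∈ Finset.range S.card, p.coeff m * ∑ s ∈ S, c s * s ^ m := by
          rw [Finset.sum_comm]
          refine Finset.sum_congr rfl fun m _ => ?_
          rw [Finset.mul_sum]
          exact Finset.sum_congr rfl fun s _ => by ring
      _ = 0 := by
          refine Finset.sum_eq_zero fun m hm => ?_
          rw [h m (Finset.mem_range.mp hm), mul_zero]
  rw [hz] at key; exact key.symm

/-- Uniqueness of FRI recovery on the sphere: the two moment sequences determine the
Dirac parameters up to a permutation. -/
theorem fri_parameters_unique (K : ℕ) (hK : 1 ≤ K)
    (θ θ' : Fin K → ℝ) (φ φ' : Fin K → ℝ) (α α' : Fin K → ℂ)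
    (hθ : ∀ k, θ k ∈ Set.Ioo 0 Real.pi) (hθ' : ∀ k, θ' k ∈ Set.Ioo 0 Real.pi)
    (hα : ∀ k, α k ≠ 0) (hα' : ∀ k, α' k ≠ 0)
    (x x' : Fin K → ℂ)
    (hx : ∀ k, x k = (Real.sin (θ k) : ℂ) * Complex.exp (-(Complex.I * (φ k : ℝ))))
    (hx' : ∀ k, x' k = (Real.sin (θ' k) : ℂ) * Complex.exp (-(Complex.I * (φ' k : ℝ))))
    (hxinj : Function.Injective x) (hx'inj : Function.Injective x')
    (h0 : ∀ m ∈ Finset.range (2 * K), ∑ k, α k * x k ^ m = ∑ k, α' k * x' k ^ m)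
    (h1 : ∀ m ∈ Finset.range (2 * K),
      ∑ k, α k * (Real.cos (θ k) : ℂ) * x k ^ m =
        ∑ k, α' k * (Real.cos (θ' k) : ℂ) * x' k ^ m) :
    ∃ σ : Equiv.Perm (Fin K),
      ∀ k, x' k = x (σ k) ∧ α' k = α (σ k) ∧ θ' k = θ (σ k) := by
  classical
  set S : Finset ℂ := (Finset.univ.image x) ∪ (Finset.univ.image x') with hS
  have hxS : ∀ k, x k ∈ S := fun k =>
    Finset.mem_union_left _ (Finset.mem_image_of_mem x (Finset.mem_univ k))
  have hx'S : ∀ k, x' k ∈ S := fun k =>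
    Finset.mem_union_right _ (Finset.mem_image_of_mem x' (Finset.mem_univ k))
  have hcard : S.card ≤ 2 * K := by
    calc S.card ≤ (Finset.univ.image x).card + (Finset.univ.image x').card :=
          Finset.card_union_le _ _
      _ ≤ K + K := add_le_add
          (le_trans Finset.card_image_le (by simp))
          (le_trans Finset.card_image_le (by simp))
      _ = 2 * K := by ring
  -- fiberwise sum lemma
  have hfib : ∀ (β y : Fin K → ℂ), (∀ k, y k ∈ S) → ∀ m : ℕ,
      ∑ s ∈ S, (∑ k ∈ Finset.univ.filter (fun k => y k = s), β k) * s ^ m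
        = ∑ k, β k * y k ^ m := by
    intro β y hy m
    rw [← Finset.sum_fiberwise_of_maps_to (fun k _ => hy k) (fun k => β k * y k ^ m)]
    refine Finset.sum_congr rfl fun s _ => ?_
    rw [Finset.sum_mul]
    refine Finset.sum_congr rfl fun k hk => ?_
    rw [(Finset.mem_filter.mp hk).2]
  -- coefficient functions
  set c0 : ℂ → ℂ := fun s =>
    (∑ k ∈ Finset.univ.filter (fun k => x k = s), α k)
      - (∑ k ∈ Finset.univ.filter (fun k => x' k = s), α' k) with hc0def
  set c1 : ℂ → ℂ := fun s =>
    (∑ k ∈ Finset.univ.filter (fun k => x k = s), α k * (Real.cos (θ k) : ℂ))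
      - (∑ k ∈ Finset.univ.filter (fun k => x' k = s), α' k * (Real.cos (θ' k) : ℂ))
    with hc1def
  have hc0 : ∀ t ∈ S, c0 t = 0 := by
    apply vandermonde_sum_zero
    intro m hm
    have hm' : m ∈ Finset.range (2 * K) := Finset.mem_range.mpr (lt_of_lt_of_le hm hcard)
    simp only [hc0def, sub_mul, Finset.sum_sub_distrib]
    rw [hfib α x hxS m, hfib α' x' hx'S m, h0 m hm', sub_self]
  have hc1 : ∀ t ∈ S, c1 t = 0 := by
    apply vandermonde_sum_zero
    intro m hm
    have hm' : m ∈ Finset.range (2 * K) := Finset.mem_range.mpr (lt_of_lt_of_le hm hcard)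
    simp only [hc1def, sub_mul, Finset.sum_sub_distrib]
    rw [hfib (fun k => α k * (Real.cos (θ k) : ℂ)) x hxS m,
      hfib (fun k => α' k * (Real.cos (θ' k) : ℂ)) x' hx'S m, h1 m hm', sub_self]
  -- the filter over x' at x' k is {k}
  have hfx' : ∀ k, Finset.univ.filter (fun j => x' j = x' k) = {k} := by
    intro k; ext j
    simp [hx'inj.eq_iff]
  -- existence of a matching node
  have exists_j : ∀ k, ∃ j, x j = x' k := by
    intro k
    by_contra hne
    push_neg at hne
    have hemp : Finset.univ.filter (fun j => x j = x' k) = ∅ := by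
      apply Finset.filter_eq_empty_iff.mpr
      intro j _; exact hne j
    have h := hc0 (x' k) (hx'S k)
    rw [hc0def] at h
    simp only [hemp, Finset.sum_empty, hfx' k, Finset.sum_singleton, zero_sub,
      neg_eq_zero] at h
    exact hα' k h
  choose f hf using exists_j
  have hfx : ∀ k, Finset.univ.filter (fun j => x j = x' k) = {f k} := by
    intro k; ext j
    simp only [Finset.mem_filter, Finset.mem_univ, true_and, Finset.mem_singleton]
    constructor
    · intro hj; exact hxinj (hj.trans (hf k).symm)
    · intro hj; rw [hj]; exact hf k
  have finj : Function.Injective f := by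
    intro a b hab
    apply hx'inj
    rw [← hf a, ← hf b, hab]
  have fbij : Function.Bijective f :=
    (Fintype.bijective_iff_injective_and_card f).mpr ⟨finj, rfl⟩
  refine ⟨Equiv.ofBijective f fbij, fun k => ?_⟩
  have hxk : x' k = x (f k) := (hf k).symm
  have hαk : α' k = α (f k) := by
    have h := hc0 (x' k) (hx'S k)
    rw [hc0def] at h
    simp only [hfx k, hfx' k, Finset.sum_singleton, sub_eq_zero] at h
    exact h.symm
  have hcosk : Real.cos (θ' k) = Real.cos (θ (f k)) := by
    have h := hc1 (x' k) (hx'S k)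
    rw [hc1def] at h
    simp only [hfx k, hfx' k, Finset.sum_singleton, sub_eq_zero] at h
    rw [hαk] at h
    have := mul_left_cancel₀ (hα (f k)) h.symm
    exact_mod_cast this
  have hθk : θ' k = θ (f k) := by
    have h1' := hθ' k
    have h2' := hθ (f k)
    exact Real.injOn_cos ⟨le_of_lt h1'.1, le_of_lt h1'.2⟩ ⟨le_of_lt h2'.1, le_of_lt h2'.2⟩ hcosk
  exact ⟨hxk, hαk, hθk⟩
end
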